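/- arXiv:1702.07644 — 5 statements merged into one kernel-verified Lean document; each statement's English description precedes it below -/
import Mathlib

section
/- Let α > 0, k > 1, δ > 0, Ω ⊂ ℝ^N measurable, and x ∈ ℝ^N \ Ω with r = dist(x, ∂Ω). If |B_{kr}(x) ∩ Ω| ≥ δ |B_{kr}(x)|, then I_Ω^α(x) = ∫_Ω |x−y|^{−(N+α)} dy ≥ c · r^{−α}, where c > 0 depends only on N, k, δ (and not on x or r). -/
open MeasureTheory Metric Module

/-!
Since `x ∉ Ω` and the ball `B_r(x)` does not meet `∂Ω`, connectedness of the ball forces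
`B_r(x) ∩ Ω = ∅`. Hence the kernel `|x - y|^{-(N+α)}` is integrable on `Ω` (there it is
dominated by a multiple of `(1 + |x - y|)^{-(N+α)}`), and on `B_{kr}(x) ∩ Ω` it is at least
`(kr)^{-(N+α)}`. Integrating over `B_{kr}(x) ∩ Ω`, whose measure is at least `δ |B_1| (kr)^N`,
gives the bound with `c = δ |B_1| k^{-α}`.
-/

theorem IsPreconnected.disjoint_of_disjoint_frontier {X : Type*} [TopologicalSpace X]
    {s t : Set X} {x : X} (hs : IsPreconnected s) (hst : Disjoint s (frontier t))
    (hxs : x ∈ s) (hxt : x ∉ t) : Disjoint s t := by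
  have hcover : s ⊆ interior t ∪ interior tᶜ :=
    compl_frontier_eq_union_interior (s := t) ▸ hst.subset_compl_right
  have hx : x ∈ interior tᶜ :=
    (hcover hxs).resolve_left fun h => hxt (interior_subset h)
  have hsub : s ⊆ interior tᶜ :=
    hs.subset_right_of_subset_union isOpen_interior isOpen_interior
      (disjoint_compl_right.mono interior_subset interior_subset) hcover ⟨x, hxs, hx⟩
  exact Set.subset_compl_iff_disjoint_right.mp (hsub.trans interior_subset)

theorem disjoint_ball_infDist_frontier {E : Type*} [NormedAddCommGroup E] [NormedSpace ℝ E]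
    {Ω : Set E} {x : E} (hx : x ∉ Ω) : Disjoint (ball x (infDist x (frontier Ω))) Ω := by
  rcases (ball x (infDist x (frontier Ω))).eq_empty_or_nonempty with h | h
  · simp [h]
  · exact (convex_ball _ _).isPreconnected.disjoint_of_disjoint_frontier disjoint_ball_infDist
      (mem_ball_self (nonempty_ball.mp h)) hx

theorem Real.rpow_neg_le_mul_one_add_rpow_neg {r t s : ℝ} (hr : 0 < r) (hrt : r ≤ t)
    (hs : 0 ≤ s) : t ^ (-s) ≤ ((1 + r) / r) ^ s * (1 + t) ^ (-s) := by
  have ht : 0 < t := hr.trans_le hrt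
  have hC : 0 < (1 + r) / r := by positivity
  have hle : 1 + t ≤ (1 + r) / r * t := by
    rw [div_mul_eq_mul_div, le_div_iff₀ hr]
    nlinarith
  calc t ^ (-s) = ((1 + r) / r) ^ s * ((1 + r) / r * t) ^ (-s) := by
        rw [Real.mul_rpow hC.le ht.le, Real.rpow_neg hC.le, mul_inv_cancel_left₀]
        exact (Real.rpow_pos_of_pos hC s).ne'
    _ ≤ ((1 + r) / r) ^ s * (1 + t) ^ (-s) :=
        mul_le_mul_of_nonneg_left
          (Real.rpow_le_rpow_of_nonpos (by positivity) hle (neg_nonpos.mpr hs)) (by positivity)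

section Haar

variable {E : Type*} [NormedAddCommGroup E] [NormedSpace ℝ E] [FiniteDimensional ℝ E]
  [MeasurableSpace E] {μ : Measure E} [μ.IsAddHaarMeasure]

theorem rpow_neg_mul_measureReal_le_setIntegral {A : Set E} {x : E} {ρ s : ℝ}
    (hA : MeasurableSet A) (hAx : A ⊆ ball x ρ) (hxA : x ∉ A) (hs : 0 ≤ s)
    (hint : IntegrableOn (fun y => ‖x - y‖ ^ (-s)) A μ) :
    ρ ^ (-s) * μ.real A ≤ ∫ y in A, ‖x - y‖ ^ (-s) ∂μ := by
  refine setIntegral_ge_of_const_le_real hA ((measure_mono hAx).trans_lt measure_ball_lt_top).ne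
    (fun y hy => ?_) hint
  have hxy : 0 < ‖x - y‖ := norm_pos_iff.mpr (sub_ne_zero.mpr fun h => hxA (h ▸ hy))
  have hyρ : ‖x - y‖ ≤ ρ := by simpa [dist_eq_norm] using (mem_ball'.mp (hAx hy)).le
  exact Real.rpow_le_rpow_of_nonpos hxy hyρ (neg_nonpos.mpr hs)

variable [BorelSpace E]

theorem mul_measureReal_ball_le_of_ofReal_mul_le {A : Set E} {x : E} {ρ δ : ℝ} (hρ : 0 < ρ)
    (hδ : 0 ≤ δ) (h : ENNReal.ofReal δ * μ (ball x ρ) ≤ μ (ball x ρ ∩ A)) :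
    δ * (ρ ^ finrank ℝ E * μ.real (ball 0 1)) ≤ μ.real (ball x ρ ∩ A) := by
  have := ENNReal.toReal_mono (measure_inter_lt_top_of_left_ne_top measure_ball_lt_top.ne).ne h
  rwa [Measure.addHaar_ball_of_pos _ _ hρ, ENNReal.toReal_mul, ENNReal.toReal_mul,
    ENNReal.toReal_ofReal hδ, ENNReal.toReal_ofReal (by positivity)] at this

theorem integrableOn_rpow_neg_norm_sub_compl_ball {s r : ℝ} (hs : (finrank ℝ E : ℝ) < s)
    (hr : 0 < r) (x : E) : IntegrableOn (fun y => ‖x - y‖ ^ (-s)) (ball x r)ᶜ μ := by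
  have hdom : Integrable (fun y => ((1 + r) / r) ^ s * (1 + ‖y - x‖) ^ (-s)) μ :=
    ((integrable_one_add_norm hs).comp_sub_right x).const_mul _
  have hmeas : Measurable fun y : E => ‖x - y‖ ^ (-s) := by fun_prop
  refine hdom.integrableOn.mono' hmeas.aestronglyMeasurable ?_
  rw [ae_restrict_iff' measurableSet_ball.compl]
  refine ae_of_all _ fun y hy => ?_
  rw [Real.norm_of_nonneg (by positivity), norm_sub_rev x y]
  have hry : r ≤ ‖y - x‖ := by simpa [dist_eq_norm] using hy
  exact Real.rpow_neg_le_mul_one_add_rpow_neg hr hry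
    ((Nat.cast_nonneg _).trans hs.le)

end Haar

theorem stmt1_general (N : ℕ) (α k δ : ℝ) (hα : 0 < α) (hk : 1 < k) (hδ : 0 < δ) :
    ∃ c > 0, ∀ Ω : Set (EuclideanSpace ℝ (Fin N)), MeasurableSet Ω →
      ∀ x ∉ Ω, ∀ r : ℝ, r = Metric.infDist x (frontier Ω) →
        ENNReal.ofReal δ * volume (ball x (k * r)) ≤ volume (ball x (k * r) ∩ Ω) →
        c * r ^ (-α) ≤ ∫ y in Ω, ‖x - y‖ ^ (-((N : ℝ) + α)) := by
  set V := volume.real (ball (0 : EuclideanSpace ℝ (Fin N)) 1)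
  have hV : 0 < V := ENNReal.toReal_pos (measure_ball_pos _ _ one_pos).ne' measure_ball_lt_top.ne
  have hk₀ : 0 < k := one_pos.trans hk
  refine ⟨δ * V * k ^ (-α), by positivity, fun Ω hΩ x hx r hr hvol => ?_⟩
  rcases (hr ▸ infDist_nonneg : 0 ≤ r).eq_or_lt with rfl | hr₀
  · rw [Real.zero_rpow (neg_ne_zero.mpr hα.ne'), mul_zero]
    exact setIntegral_nonneg hΩ fun y _ => by positivity
  set s := (N : ℝ) + α
  set B := ball x (k * r)
  have hkr : 0 < k * r := mul_pos hk₀ hr₀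
  have hΩr : Ω ⊆ (ball x r)ᶜ := hr ▸ (disjoint_ball_infDist_frontier hx).subset_compl_left
  have hint : IntegrableOn (fun y => ‖x - y‖ ^ (-s)) Ω :=
    (integrableOn_rpow_neg_norm_sub_compl_ball (by simpa [s]) hr₀ x).mono_set hΩr
  have hvolB : δ * ((k * r) ^ N * V) ≤ volume.real (B ∩ Ω) := by
    simpa using mul_measureReal_ball_le_of_ofReal_mul_le hkr hδ.le hvol
  have hpow : (k * r) ^ (-s) * (k * r) ^ N = k ^ (-α) * r ^ (-α) := by
    rw [← Real.rpow_natCast, ← Real.rpow_add hkr, ← Real.mul_rpow hk₀.le hr₀.le]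
    congr 1
    ring
  calc δ * V * k ^ (-α) * r ^ (-α) = (k * r) ^ (-s) * (δ * ((k * r) ^ N * V)) := by
        linear_combination (-(δ * V)) * hpow
    _ ≤ (k * r) ^ (-s) * volume.real (B ∩ Ω) := by gcongr
    _ ≤ ∫ y in B ∩ Ω, ‖x - y‖ ^ (-s) :=
        rpow_neg_mul_measureReal_le_setIntegral (measurableSet_ball.inter hΩ)
          Set.inter_subset_left (fun h => hx h.2) (by positivity)
          (hint.mono_set Set.inter_subset_right)
    _ ≤ ∫ y in Ω, ‖x - y‖ ^ (-s) :=
        setIntegral_mono_set hint (ae_of_all _ fun y => by positivity)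
          Set.inter_subset_right.eventuallyLE

theorem stmt1 (N : ℕ) (hN : 0 < N) (α k δ : ℝ) (hα : 0 < α) (hk : 1 < k) (hδ : 0 < δ) :
    ∃ c > 0, ∀ Ω : Set (EuclideanSpace ℝ (Fin N)), MeasurableSet Ω →
      ∀ x ∉ Ω, ∀ r : ℝ, r = Metric.infDist x (frontier Ω) →
        ENNReal.ofReal δ * volume (ball x (k * r)) ≤ volume (ball x (k * r) ∩ Ω) →
        c * r ^ (-α) ≤ ∫ y in Ω, ‖x - y‖ ^ (-((N : ℝ) + α)) :=
  stmt1_general N α k δ hα hk hδ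
end

section
/- Let 0 < α < β ≤ 1, let φ : B → ℝ be β-Hölder continuous with constant C_φ on a ball B ⊂ ℝ^{N−1}. Then there exists c₀ > 0 such that for every x = (x′, x_N) with x′ ∈ B, x_N ≥ φ(x′), and every y′ ∈ B: |x − (y′, φ(y′))| ≥ c₀ · min(|x_N − φ(x′)|, |x_N − φ(x′)|^{1/β}). -/
open MeasureTheory Metric

theorem stmt5 (n : ℕ) (α β : ℝ) (hα0 : 0 < α) (hαβ : α < β) (hβ1 : β ≤ 1)
    (B : Set (EuclideanSpace ℝ (Fin n))) (φ : EuclideanSpace ℝ (Fin n) → ℝ)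
    (Cφ : ℝ) (hCφ : 0 < Cφ)
    (hHol : ∀ x' ∈ B, ∀ y' ∈ B, |φ x' - φ y'| ≤ Cφ * ‖x' - y'‖ ^ β) :
    ∃ c₀ > 0, ∀ x' ∈ B, ∀ xN : ℝ, φ x' ≤ xN → ∀ y' ∈ B,
      c₀ * min (|xN - φ x'|) (|xN - φ x'| ^ (1 / β)) ≤
        Real.sqrt (‖x' - y'‖ ^ 2 + (xN - φ y') ^ 2) := by
  have hβ0 : 0 < β := lt_trans hα0 hαβ
  refine ⟨min (1/2) ((2*Cφ)⁻¹ ^ (1/β)), lt_min (by norm_num)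
    (Real.rpow_pos_of_pos (by positivity) _), ?_⟩
  intro x' hx' xN hxN y' hy'
  set d := xN - φ x' with hd
  have hd0 : 0 ≤ d := by simp [hd]; linarith
  rw [abs_of_nonneg hd0]
  have hmin0 : 0 ≤ min d (d ^ (1/β)) := le_min hd0 (Real.rpow_nonneg hd0 _)
  have hRHS1 : |xN - φ y'| ≤ Real.sqrt (‖x' - y'‖ ^ 2 + (xN - φ y') ^ 2) := by
    rw [← Real.sqrt_sq_eq_abs]
    apply Real.sqrt_le_sqrt
    nlinarith [sq_nonneg ‖x' - y'‖]
  have hRHS2 : ‖x' - y'‖ ≤ Real.sqrt (‖x' - y'‖ ^ 2 + (xN - φ y') ^ 2) := by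
    rw [Real.le_sqrt (norm_nonneg _)]
    · nlinarith [sq_nonneg (xN - φ y')]
    · positivity
  have hHxy := hHol x' hx' y' hy'
  by_cases h : Cφ * ‖x' - y'‖ ^ β ≤ d / 2
  · have h1 : d / 2 ≤ |xN - φ y'| := by
      have h2 := neg_abs_le (φ x' - φ y')
      have h3 : d / 2 ≤ xN - φ y' := by
        have : xN - φ y' = d + (φ x' - φ y') := by rw [hd]; ring
        linarith
      linarith [le_abs_self (xN - φ y')]
    have h4 : min (1/2) ((2*Cφ)⁻¹ ^ (1/β)) * min d (d ^ (1/β)) ≤ (1/2) * d :=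
      mul_le_mul (min_le_left _ _) (min_le_left _ _) hmin0 (by norm_num)
    linarith
  · push_neg at h
    have h2 : d / (2*Cφ) ≤ ‖x' - y'‖ ^ β := by
      rw [div_le_iff₀ (by positivity)]
      nlinarith
    have h3 : (d / (2*Cφ)) ^ (1/β) ≤ (‖x' - y'‖ ^ β) ^ (1/β) :=
      Real.rpow_le_rpow (by positivity) h2 (by positivity)
    have h4 : (‖x' - y'‖ ^ β) ^ (1/β) = ‖x' - y'‖ := by
      rw [← Real.rpow_mul (norm_nonneg _), mul_one_div, div_self hβ0.ne', Real.rpow_one]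
    have h5 : (d / (2*Cφ)) ^ (1/β) = (2*Cφ)⁻¹ ^ (1/β) * d ^ (1/β) := by
      rw [div_eq_mul_inv, Real.mul_rpow hd0 (by positivity)]; ring
    have h6 : min (1/2) ((2*Cφ)⁻¹ ^ (1/β)) * min d (d ^ (1/β)) ≤
        (2*Cφ)⁻¹ ^ (1/β) * d ^ (1/β) :=
      mul_le_mul (min_le_right _ _) (min_le_right _ _) hmin0
        (Real.rpow_nonneg (by positivity) _)
    linarith
end

section
/- Let Ω ⊂ ℝ^N be bounded, D ⊂ Ω^c of positive measure, and 0 < s < 1. There exists a constant C = C(Ω, N, s, D) > 0 such that for every measurable u : ℝ^N → ℝ vanishing a.e. on D with finite Gagliardo energy over Q_Ω = ℝ^{2N} \ (Ω^c × Ω^c), one has ∫_Ω u² dx ≤ C ∫∫_{Q_Ω} |u(x) − u(y)|² / |x−y|^{N+2s} dx dy (Poincaré inequality for the mixed fractional problem). -/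
/-! Pick a bounded piece `E` of `D` with positive measure. For `x ∈ Ω` and `y ∈ E` the kernel
`|x - y|^{-(N+2s)}` is at least a constant `c > 0`, and `u(y) = 0`, so the energy over
`Ω × E ⊆ Q_Ω` is at least `c |E| ∫_Ω u²`. -/

open MeasureTheory Metric

theorem exists_nat_measure_inter_ball_pos {α : Type*} [PseudoMetricSpace α] [MeasurableSpace α]
    {μ : Measure α} {D : Set α} (hD : 0 < μ D) (x : α) :
    ∃ n : ℕ, 0 < μ (D ∩ ball x n) := by
  by_contra! h
  have hnull : μ (⋃ n : ℕ, D ∩ ball x n) = 0 :=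
    measure_iUnion_null fun n => nonpos_iff_eq_zero.mp (h n)
  rw [← Set.inter_iUnion, iUnion_ball_nat, Set.inter_univ] at hnull
  exact hD.ne' hnull

theorem rpow_neg_le_rpow_neg_dist_of_mem_ball {α : Type*} [PseudoMetricSpace α] {z x y : α}
    {R a : ℝ} (hx : x ∈ ball z R) (hy : y ∈ ball z R) (hxy : 0 < dist x y) (ha : 0 ≤ a) :
    (2 * R) ^ (-a) ≤ dist x y ^ (-a) := by
  have hdist : dist x y ≤ 2 * R := by
    linarith [dist_triangle_right x y z, mem_ball.mp hx, mem_ball.mp hy]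
  exact Real.rpow_le_rpow_of_nonpos hxy hdist (neg_nonpos.mpr ha)

section KernelLowerBound

variable {α : Type*} [MeasurableSpace α] {μ : Measure α} [SFinite μ] {Ω E : Set α}
  {u : α → ℝ} {K : α × α → ℝ} {c : ℝ}

theorem lintegral_sq_mul_measure_le_of_le_kernel (hΩ : MeasurableSet Ω) (hE : MeasurableSet E)
    (hu : AEMeasurable u μ) (hu0 : ∀ᵐ y ∂μ, y ∈ E → u y = 0)
    (hK : ∀ x ∈ Ω, ∀ y ∈ E, c ≤ K (x, y)) :
    ENNReal.ofReal c * (∫⁻ x in Ω, ENNReal.ofReal (u x ^ 2) ∂μ) * μ E ≤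
      ∫⁻ p in Ω ×ˢ E, ENNReal.ofReal ((u p.1 - u p.2) ^ 2 * K p) ∂μ.prod μ := by
  have hsq : AEMeasurable (fun x => ENNReal.ofReal (c * u x ^ 2)) (μ.restrict Ω) :=
    (aemeasurable_const.mul (hu.restrict.pow_const 2)).ennreal_ofReal
  have hlower : ∀ᵐ p ∂(μ.restrict Ω).prod (μ.restrict E),
      ENNReal.ofReal (c * u p.1 ^ 2) * 1 ≤ ENNReal.ofReal ((u p.1 - u p.2) ^ 2 * K p) := by
    filter_upwards [Measure.quasiMeasurePreserving_fst.ae (ae_restrict_mem hΩ),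
      Measure.quasiMeasurePreserving_snd.ae (ae_restrict_mem hE),
      Measure.quasiMeasurePreserving_snd.ae ((ae_restrict_iff' hE).2 hu0)] with p hpx hpE hpu
    rw [mul_one, hpu, sub_zero, mul_comm c]
    exact ENNReal.ofReal_le_ofReal
      (mul_le_mul_of_nonneg_left (hK p.1 hpx p.2 hpE) (sq_nonneg _))
  calc ENNReal.ofReal c * (∫⁻ x in Ω, ENNReal.ofReal (u x ^ 2) ∂μ) * μ E
      = (∫⁻ x in Ω, ENNReal.ofReal (c * u x ^ 2) ∂μ) * ∫⁻ _ in E, 1 ∂μ := by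
        simp_rw [ENNReal.ofReal_mul' (sq_nonneg _)]
        rw [lintegral_const_mul' _ _ ENNReal.ofReal_ne_top, setLIntegral_one]
    _ = ∫⁻ p, ENNReal.ofReal (c * u p.1 ^ 2) * 1 ∂(μ.restrict Ω).prod (μ.restrict E) :=
        (lintegral_prod_mul hsq aemeasurable_const).symm
    _ ≤ ∫⁻ p in Ω ×ˢ E, ENNReal.ofReal ((u p.1 - u p.2) ^ 2 * K p) ∂μ.prod μ := by
        rw [← Measure.prod_restrict]
        exact lintegral_mono_ae hlower

theorem integral_sq_le_of_le_kernel {Q : Set (α × α)} (hΩ : MeasurableSet Ω)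
    (hE : MeasurableSet E) (hΩEQ : Ω ×ˢ E ⊆ Q) (hE0 : 0 < μ E) (hEfin : μ E ≠ ⊤)
    (hu : AEMeasurable u μ) (hu0 : ∀ᵐ y ∂μ, y ∈ E → u y = 0) (hc : 0 < c)
    (hK : ∀ x ∈ Ω, ∀ y ∈ E, c ≤ K (x, y)) (hK_nonneg : ∀ p, 0 ≤ K p)
    (hint : IntegrableOn (fun p => (u p.1 - u p.2) ^ 2 * K p) Q (μ.prod μ)) :
    ∫ x in Ω, u x ^ 2 ∂μ ≤
      (c * (μ E).toReal)⁻¹ * ∫ p in Q, (u p.1 - u p.2) ^ 2 * K p ∂μ.prod μ := by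
  have hE0' : 0 < (μ E).toReal := ENNReal.toReal_pos hE0.ne' hEfin
  have hg_nonneg : ∀ p, 0 ≤ (u p.1 - u p.2) ^ 2 * K p :=
    fun p => mul_nonneg (sq_nonneg _) (hK_nonneg p)
  rw [le_inv_mul_iff₀ (by positivity),
    ← ENNReal.ofReal_le_ofReal_iff (setIntegral_nonneg_of_ae_restrict
      (Filter.Eventually.of_forall fun p => hg_nonneg p)),
    ofReal_integral_eq_lintegral_ofReal hint (Filter.Eventually.of_forall hg_nonneg),
    integral_eq_lintegral_of_nonneg_ae (Filter.Eventually.of_forall fun x => sq_nonneg (u x))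
      (hu.restrict.pow_const 2).aestronglyMeasurable]
  calc ENNReal.ofReal (c * (μ E).toReal * (∫⁻ x in Ω, ENNReal.ofReal (u x ^ 2) ∂μ).toReal)
      ≤ ENNReal.ofReal c * (∫⁻ x in Ω, ENNReal.ofReal (u x ^ 2) ∂μ) * μ E := by
        rw [mul_right_comm, ENNReal.ofReal_mul (by positivity), ENNReal.ofReal_mul hc.le,
          ENNReal.ofReal_toReal hEfin]
        gcongr
        exact ENNReal.ofReal_toReal_le
    _ ≤ ∫⁻ p in Ω ×ˢ E, ENNReal.ofReal ((u p.1 - u p.2) ^ 2 * K p) ∂μ.prod μ :=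
        lintegral_sq_mul_measure_le_of_le_kernel hΩ hE hu hu0 hK
    _ ≤ ∫⁻ p in Q, ENNReal.ofReal ((u p.1 - u p.2) ^ 2 * K p) ∂μ.prod μ :=
        lintegral_mono_set hΩEQ

end KernelLowerBound

theorem stmt9_general (N : ℕ) (s : ℝ) (hs0 : 0 < s)
    (Ω D : Set (EuclideanSpace ℝ (Fin N))) (hΩo : IsOpen Ω)
    (hΩb : Bornology.IsBounded Ω)
    (hDm : MeasurableSet D) (hD : D ⊆ Ωᶜ) (hDpos : 0 < volume D) :
    ∃ C > 0, ∀ u : EuclideanSpace ℝ (Fin N) → ℝ, Measurable u →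
      (∀ᵐ x ∂volume, x ∈ D → u x = 0) →
      IntegrableOn
        (fun p : EuclideanSpace ℝ (Fin N) × EuclideanSpace ℝ (Fin N) =>
          (u p.1 - u p.2) ^ 2 * ‖p.1 - p.2‖ ^ (-((N : ℝ) + 2 * s)))
        (Set.univ \ (Ωᶜ ×ˢ Ωᶜ)) volume →
      ∫ x in Ω, (u x) ^ 2 ≤
        C * ∫ p in
            (Set.univ \ (Ωᶜ ×ˢ Ωᶜ) :
              Set (EuclideanSpace ℝ (Fin N) × EuclideanSpace ℝ (Fin N))),
          (u p.1 - u p.2) ^ 2 * ‖p.1 - p.2‖ ^ (-((N : ℝ) + 2 * s)) := by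
  obtain ⟨r, hr⟩ := hΩb.subset_ball 0
  obtain ⟨n, hn⟩ := exists_nat_measure_inter_ball_pos hDpos 0
  set R : ℝ := max r n
  set E := D ∩ ball 0 R
  have hE0 : 0 < volume E := hn.trans_le <| measure_mono <|
    Set.inter_subset_inter_right _ (ball_subset_ball (le_max_right _ _))
  have hEfin : volume E ≠ ⊤ :=
    ((measure_mono Set.inter_subset_right).trans_lt measure_ball_lt_top).ne
  have hR : 0 < R := by
    obtain ⟨y, -, hy⟩ := nonempty_of_measure_ne_zero hE0.ne'
    exact dist_nonneg.trans_lt hy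
  set a : ℝ := (N : ℝ) + 2 * s
  have hK : ∀ x ∈ Ω, ∀ y ∈ E, (2 * R) ^ (-a) ≤ ‖x - y‖ ^ (-a) := by
    intro x hx y hy
    rw [← dist_eq_norm]
    exact rpow_neg_le_rpow_neg_dist_of_mem_ball (ball_subset_ball (le_max_left _ _) (hr hx)) hy.2
      (dist_pos.2 fun h => hD hy.1 (h ▸ hx)) (by positivity)
  have hEreal : 0 < (volume E).toReal := ENNReal.toReal_pos hE0.ne' hEfin
  refine ⟨((2 * R) ^ (-a) * (volume E).toReal)⁻¹, by positivity, fun u hu hu0 hint => ?_⟩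
  exact integral_sq_le_of_le_kernel hΩo.measurableSet (hDm.inter measurableSet_ball)
    (fun p hp => ⟨trivial, fun h => h.1 hp.1⟩) hE0 hEfin hu.aemeasurable
    (hu0.mono fun x hx hxE => hx hxE.1) (by positivity) hK
    (fun p => Real.rpow_nonneg (norm_nonneg _) _) hint

theorem stmt9 (N : ℕ) (hN : 0 < N) (s : ℝ) (hs0 : 0 < s) (hs1 : s < 1)
    (Ω D : Set (EuclideanSpace ℝ (Fin N))) (hΩo : IsOpen Ω)
    (hΩb : Bornology.IsBounded Ω) (hΩne : Ω.Nonempty)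
    (hDm : MeasurableSet D) (hD : D ⊆ Ωᶜ) (hDpos : 0 < volume D) :
    ∃ C > 0, ∀ u : EuclideanSpace ℝ (Fin N) → ℝ, Measurable u →
      (∀ᵐ x ∂volume, x ∈ D → u x = 0) →
      IntegrableOn
        (fun p : EuclideanSpace ℝ (Fin N) × EuclideanSpace ℝ (Fin N) =>
          (u p.1 - u p.2) ^ 2 * ‖p.1 - p.2‖ ^ (-((N : ℝ) + 2 * s)))
        (Set.univ \ (Ωᶜ ×ˢ Ωᶜ)) volume →
      ∫ x in Ω, (u x) ^ 2 ≤
        C * ∫ p in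
            (Set.univ \ (Ωᶜ ×ˢ Ωᶜ) :
              Set (EuclideanSpace ℝ (Fin N) × EuclideanSpace ℝ (Fin N))),
          (u p.1 - u p.2) ^ 2 * ‖p.1 - p.2‖ ^ (-((N : ℝ) + 2 * s)) :=
  stmt9_general N s hs0 Ω D hΩo hΩb hDm hD hDpos
end

section
/- Let Ω ⊂ ℝ^N be bounded and open, u ∈ L¹(Ω) with u ≥ 0, and suppose u is extended to Ω^c by the Neumann condition N_s u = 0, i.e., u(x) = (∫_Ω u(y)|x−y|^{−(N+2s)} dy) / (∫_Ω |x−y|^{−(N+2s)} dy) for x ∈ Ω^c. Then for any sequence x_j ∈ Ω^c with |x_j| → ∞, u(x_j) → (1/|Ω|) ∫_Ω u(y) dy. -/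
/-!
Dividing numerator and denominator by `‖x‖ ^ p`, the weights become `(‖x - y‖ / ‖x‖) ^ p`. On a
bounded set these tend to `1` pointwise as `‖x‖ → ∞` and are eventually bounded by `2 ^ |p|`, so by
dominated convergence the numerator tends to `∫_Ω u` and the denominator to `|Ω|`.
-/

open MeasureTheory Filter Topology Bornology

theorem Real.rpow_le_two_rpow_abs {r : ℝ} (p : ℝ) (hr₁ : 2⁻¹ ≤ r) (hr₂ : r ≤ 2) :
    r ^ p ≤ 2 ^ |p| := by
  have hr₀ : 0 ≤ r := le_trans (by norm_num) hr₁
  rcases le_or_gt 0 p with hp | hp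
  · rw [abs_of_nonneg hp]
    exact Real.rpow_le_rpow hr₀ hr₂ hp
  · calc r ^ p = r⁻¹ ^ (-p) := by rw [Real.inv_rpow hr₀, Real.rpow_neg hr₀, inv_inv]
      _ ≤ 2 ^ (-p) :=
        Real.rpow_le_rpow (inv_nonneg.2 hr₀) (inv_le_of_inv_le₀ (by norm_num) hr₁) (by linarith)
      _ = 2 ^ |p| := by rw [abs_of_neg hp]

variable {E : Type*} [NormedAddCommGroup E]

instance isCountablyGenerated_cobounded : (cobounded E).IsCountablyGenerated := by
  rw [← comap_norm_atTop]; infer_instance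

theorem tendsto_norm_sub_div_norm_cobounded (y : E) :
    Tendsto (fun x => ‖x - y‖ / ‖x‖) (cobounded E) (𝓝 1) := by
  have hsmall : Tendsto (fun x : E => ‖y‖ / ‖x‖) (cobounded E) (𝓝 0) :=
    tendsto_const_nhds.div_atTop tendsto_norm_cobounded_atTop
  rw [← tendsto_sub_nhds_zero_iff]
  refine squeeze_zero_norm' ?_ hsmall
  filter_upwards [eventually_cobounded_le_norm 1] with x hx
  have hx₀ : 0 < ‖x‖ := by linarith
  rw [Real.norm_eq_abs, div_sub_one hx₀.ne', abs_div, abs_of_pos hx₀]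
  gcongr
  simpa using abs_norm_sub_norm_le (x - y) x

theorem eventually_cobounded_forall_norm_sub_div_norm_rpow_le (R p : ℝ) :
    ∀ᶠ x in cobounded E, ∀ y : E, ‖y‖ ≤ R → (‖x - y‖ / ‖x‖) ^ p ≤ 2 ^ |p| := by
  filter_upwards [eventually_cobounded_le_norm (max (2 * R) 1)] with x hx y hy
  have hx₀ : 0 < ‖x‖ := lt_of_lt_of_le (by simp) hx
  have hR : 2 * R ≤ ‖x‖ := le_trans (le_max_left _ _) hx
  have hlow := norm_sub_norm_le x y
  have hup := norm_sub_le x y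
  apply Real.rpow_le_two_rpow_abs
  · rw [le_div_iff₀ hx₀]; linarith
  · rw [div_le_iff₀ hx₀]; linarith [norm_nonneg y]

variable [MeasurableSpace E] {μ : Measure E} {Ω : Set E}

theorem setIntegral_mul_norm_sub_rpow_div_eq {x : E} (hx : x ≠ 0) (f : E → ℝ) (p : ℝ) :
    (∫ y in Ω, f y * ‖x - y‖ ^ p ∂μ) / ∫ y in Ω, ‖x - y‖ ^ p ∂μ =
      (∫ y in Ω, f y * (‖x - y‖ / ‖x‖) ^ p ∂μ) / ∫ y in Ω, (‖x - y‖ / ‖x‖) ^ p ∂μ := by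
  simp_rw [Real.div_rpow (norm_nonneg _) (norm_nonneg _), ← mul_div_assoc, integral_div]
  exact (div_div_div_cancel_right₀ (Real.rpow_pos_of_pos (norm_pos_iff.2 hx) p).ne' _ _).symm

variable [OpensMeasurableSpace E]

theorem tendsto_setIntegral_mul_norm_sub_div_norm_rpow (hΩm : MeasurableSet Ω)
    (hΩb : IsBounded Ω) {f : E → ℝ} (hf : IntegrableOn f Ω μ) (p : ℝ) :
    Tendsto (fun x => ∫ y in Ω, f y * (‖x - y‖ / ‖x‖) ^ p ∂μ) (cobounded E)
      (𝓝 (∫ y in Ω, f y ∂μ)) := by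
  obtain ⟨R, hR⟩ := hΩb.exists_norm_le
  have hmeas (x : E) : Measurable fun y : E => (‖x - y‖ / ‖x‖) ^ p :=
    ((continuous_const.sub continuous_id).norm.div_const _).measurable.pow_const p
  refine tendsto_integral_filter_of_dominated_convergence (fun y => ‖f y‖ * 2 ^ |p|)
    (.of_forall fun x => hf.1.mul (hmeas x).aestronglyMeasurable) ?_ (hf.norm.mul_const _) ?_
  · filter_upwards [eventually_cobounded_forall_norm_sub_div_norm_rpow_le R p] with x hx
    filter_upwards [ae_restrict_mem hΩm] with y hy
    rw [norm_mul, Real.norm_of_nonneg (Real.rpow_nonneg (by positivity) p)]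
    exact mul_le_mul_of_nonneg_left (hx y (hR y hy)) (norm_nonneg _)
  · refine .of_forall fun y => ?_
    simpa using tendsto_const_nhds.mul
      ((tendsto_norm_sub_div_norm_cobounded y).rpow_const (p := p) (.inl one_ne_zero))

theorem tendsto_setIntegral_mul_norm_sub_rpow_div_cobounded (hΩm : MeasurableSet Ω)
    (hΩb : IsBounded Ω) (hΩμ : μ Ω ≠ ⊤) {f : E → ℝ} (hf : IntegrableOn f Ω μ) (p : ℝ) :
    Tendsto (fun x => (∫ y in Ω, f y * ‖x - y‖ ^ p ∂μ) / ∫ y in Ω, ‖x - y‖ ^ p ∂μ)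
      (cobounded E) (𝓝 ((μ.real Ω)⁻¹ * ∫ y in Ω, f y ∂μ)) := by
  -- On a null set every integral vanishes, and `0 / 0 = 0⁻¹ * 0 = 0`.
  by_cases hΩ₀ : μ Ω = 0
  · simpa [Measure.restrict_eq_zero.2 hΩ₀] using tendsto_const_nhds
  have hvol : 0 < μ.real Ω := ENNReal.toReal_pos hΩ₀ hΩμ
  have hden := tendsto_setIntegral_mul_norm_sub_div_norm_rpow hΩm hΩb
    (integrableOn_const hΩμ (C := (1 : ℝ))) p
  simp only [one_mul, setIntegral_const, smul_eq_mul, mul_one] at hden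
  rw [inv_mul_eq_div]
  refine ((tendsto_setIntegral_mul_norm_sub_div_norm_rpow hΩm hΩb hf p).div hden
    hvol.ne').congr' ?_
  filter_upwards [eventually_cobounded_le_norm 1] with x hx
  exact (setIntegral_mul_norm_sub_rpow_div_eq (norm_pos_iff.1 (by linarith)) f p).symm

theorem stmt10_general (N : ℕ) (s : ℝ)
    (Ω : Set (EuclideanSpace ℝ (Fin N))) (hΩo : IsOpen Ω)
    (hΩb : Bornology.IsBounded Ω)
    (u : EuclideanSpace ℝ (Fin N) → ℝ) (hu : IntegrableOn u Ω volume)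
    (hext : ∀ x ∈ Ωᶜ, u x =
      (∫ y in Ω, u y * ‖x - y‖ ^ (-((N : ℝ) + 2 * s))) /
        ∫ y in Ω, ‖x - y‖ ^ (-((N : ℝ) + 2 * s)))
    (x : ℕ → EuclideanSpace ℝ (Fin N)) (hx : ∀ j, x j ∈ Ωᶜ)
    (hnorm : Filter.Tendsto (fun j => ‖x j‖) Filter.atTop Filter.atTop) :
    Filter.Tendsto (fun j => u (x j)) Filter.atTop
      (nhds ((volume Ω).toReal⁻¹ * ∫ y in Ω, u y)) := by
  have hlim := (tendsto_setIntegral_mul_norm_sub_rpow_div_cobounded hΩo.measurableSet hΩb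
    hΩb.measure_lt_top.ne hu (-((N : ℝ) + 2 * s))).comp
      (tendsto_norm_atTop_iff_cobounded.1 hnorm)
  exact hlim.congr fun j => (hext (x j) (hx j)).symm

theorem stmt10 (N : ℕ) (hN : 0 < N) (s : ℝ) (hs0 : 0 < s) (hs1 : s < 1)
    (Ω : Set (EuclideanSpace ℝ (Fin N))) (hΩo : IsOpen Ω)
    (hΩb : Bornology.IsBounded Ω) (hΩne : Ω.Nonempty)
    (u : EuclideanSpace ℝ (Fin N) → ℝ) (hu : IntegrableOn u Ω volume)
    (hpos : ∀ y, 0 ≤ u y)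
    (hext : ∀ x ∈ Ωᶜ, u x =
      (∫ y in Ω, u y * ‖x - y‖ ^ (-((N : ℝ) + 2 * s))) /
        ∫ y in Ω, ‖x - y‖ ^ (-((N : ℝ) + 2 * s)))
    (x : ℕ → EuclideanSpace ℝ (Fin N)) (hx : ∀ j, x j ∈ Ωᶜ)
    (hnorm : Filter.Tendsto (fun j => ‖x j‖) Filter.atTop Filter.atTop) :
    Filter.Tendsto (fun j => u (x j)) Filter.atTop
      (nhds ((volume Ω).toReal⁻¹ * ∫ y in Ω, u y)) :=
  stmt10_general N s Ω hΩo hΩb u hu hext x hx hnorm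
end

section
/- Let Ω ⊂ ℝ^N be a bounded open set contained in the ball B_{R₀}, u ∈ L¹(Ω) with u ≥ 0, and extend u to Ω^c by u(x) = (∫_Ω u(y)|x−y|^{−(N+2s)} dy)/(∫_Ω |x−y|^{−(N+2s)} dy). Then there exists C > 0 depending only on N, s, R₀ such that for all x ∈ Ω^c with |x| ≥ 2R₀: |u(x) − (1/|Ω|)∫_Ω u| ≤ (C/|x|) · (1/|Ω|)∫_Ω u. That is, the convergence of u(x) to its average over Ω as |x| → ∞ happens at rate 1/|x|. -/
/-!
For `y ∈ Ω ⊆ B_{R₀}` and `‖x‖ = t > R₀` the kernel `‖x - y‖ ^ (-p)`, `p = N + 2s`, lies between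
`m = (t + R₀) ^ (-p)` and `M = (t - R₀) ^ (-p)`. The extension `u x` is the average of `u` weighted
by this kernel, so it lies between `m / M` and `M / m` times the plain average, and
`M / m - 1 = ((t + R₀) / (t - R₀)) ^ p - 1 = O(R₀ / t)` once `t ≥ 2 R₀`.
-/

open MeasureTheory Metric Set

section WeightedAverage

variable {α : Type*} [MeasurableSpace α] {μ : Measure α} {Ω : Set α} {u k : α → ℝ} {m M : ℝ}

lemma MeasureTheory.IntegrableOn.mul_of_mem_Icc (hu : IntegrableOn u Ω μ) (hΩ : MeasurableSet Ω)
    (hk : AEStronglyMeasurable k (μ.restrict Ω)) (hkΩ : ∀ y ∈ Ω, k y ∈ Icc m M) :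
    IntegrableOn (fun y => u y * k y) Ω μ := by
  refine hu.mul_bdd (c := max |m| |M|) hk ?_
  filter_upwards [ae_restrict_mem hΩ] with y hy
  exact abs_le_max_abs_abs (hkΩ y hy).1 (hkΩ y hy).2

lemma setIntegral_mul_mem_Icc (hΩ : MeasurableSet Ω) (hu : IntegrableOn u Ω μ)
    (hu0 : ∀ y ∈ Ω, 0 ≤ u y) (hk : AEStronglyMeasurable k (μ.restrict Ω))
    (hkΩ : ∀ y ∈ Ω, k y ∈ Icc m M) :
    ∫ y in Ω, u y * k y ∂μ ∈ Icc (m * ∫ y in Ω, u y ∂μ) (M * ∫ y in Ω, u y ∂μ) := by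
  have huk := hu.mul_of_mem_Icc hΩ hk hkΩ
  rw [← integral_const_mul, ← integral_const_mul]
  refine ⟨setIntegral_mono_on (hu.const_mul m) huk hΩ fun y hy => ?_,
    setIntegral_mono_on huk (hu.const_mul M) hΩ fun y hy => ?_⟩
  · rw [mul_comm m]; exact mul_le_mul_of_nonneg_left (hkΩ y hy).1 (hu0 y hy)
  · rw [mul_comm M]; exact mul_le_mul_of_nonneg_left (hkΩ y hy).2 (hu0 y hy)

lemma abs_div_sub_inv_mul_le_of_mem_Icc {S V I J : ℝ} (hm : 0 < m) (hV : 0 < V) (hS : 0 ≤ S)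
    (hJ : J ∈ Icc (m * S) (M * S)) (hI : I ∈ Icc (m * V) (M * V)) :
    |J / I - V⁻¹ * S| ≤ (M / m - 1) * (V⁻¹ * S) := by
  have hmM : m ≤ M := le_of_mul_le_mul_right (hI.1.trans hI.2) hV
  have hM : 0 < M := hm.trans_le hmM
  have hI0 : 0 < I := (mul_pos hm hV).trans_le hI.1
  have hA : 0 ≤ V⁻¹ * S := by positivity
  have hupper : J / I ≤ M / m * (V⁻¹ * S) := by
    calc J / I ≤ M * S / (m * V) := div_le_div₀ (by positivity) hJ.2 (by positivity) hI.1
      _ = M / m * (V⁻¹ * S) := by field_simp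
  have hlower : m / M * (V⁻¹ * S) ≤ J / I := by
    calc m / M * (V⁻¹ * S) = m * S / (M * V) := by field_simp
      _ ≤ J / I := div_le_div₀ ((mul_nonneg hm.le hS).trans hJ.1) hJ.1 hI0 hI.2
  -- `m / M + M / m ≥ 2`, so the lower deviation is at most the upper one
  have hsum : 2 ≤ m / M + M / m := by
    rw [div_add_div _ _ hM.ne' hm.ne', le_div_iff₀ (by positivity)]
    nlinarith [sq_nonneg (m - M)]
  rw [abs_le]
  constructor <;> nlinarith

lemma abs_setIntegral_mul_div_sub_average_le (hΩ : MeasurableSet Ω) (hμΩ : μ Ω ≠ ⊤)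
    (hμΩ0 : μ Ω ≠ 0) (hu : IntegrableOn u Ω μ) (hu0 : ∀ y ∈ Ω, 0 ≤ u y)
    (hk : AEStronglyMeasurable k (μ.restrict Ω)) (hm : 0 < m) (hkΩ : ∀ y ∈ Ω, k y ∈ Icc m M) :
    |(∫ y in Ω, u y * k y ∂μ) / (∫ y in Ω, k y ∂μ) - (μ Ω).toReal⁻¹ * ∫ y in Ω, u y ∂μ| ≤
      (M / m - 1) * ((μ Ω).toReal⁻¹ * ∫ y in Ω, u y ∂μ) := by
  have hI := setIntegral_mul_mem_Icc hΩ (integrableOn_const hμΩ) (fun _ _ => zero_le_one) hk hkΩ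
  simp only [one_mul, setIntegral_const, smul_eq_mul, mul_one] at hI
  exact abs_div_sub_inv_mul_le_of_mem_Icc hm (ENNReal.toReal_pos hμΩ0 hμΩ)
    (setIntegral_nonneg hΩ hu0) (setIntegral_mul_mem_Icc hΩ hu hu0 hk hkΩ) hI

end WeightedAverage

lemma rpow_neg_norm_sub_mem_Icc {E : Type*} [SeminormedAddCommGroup E] {x y : E} {R p : ℝ}
    (hp : 0 ≤ p) (hy : ‖y‖ < R) (hx : R < ‖x‖) :
    ‖x - y‖ ^ (-p) ∈ Icc ((‖x‖ + R) ^ (-p)) ((‖x‖ - R) ^ (-p)) := by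
  have hlow : ‖x‖ - R ≤ ‖x - y‖ := by linarith [norm_sub_norm_le x y]
  have hupp : ‖x - y‖ ≤ ‖x‖ + R := by linarith [norm_sub_le x y]
  exact ⟨Real.rpow_le_rpow_of_nonpos (by linarith) hupp (by linarith),
    Real.rpow_le_rpow_of_nonpos (by linarith) hlow (by linarith)⟩

lemma Real.rpow_sub_one_le_mul_rpow {r p : ℝ} (hr : 1 ≤ r) (hp : 0 ≤ p) :
    r ^ p - 1 ≤ p * (r - 1) * r ^ p := by
  have hr0 : 0 < r := zero_lt_one.trans_le hr
  rw [Real.rpow_def_of_pos hr0]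
  set z := Real.log r * p
  have hz : 0 ≤ z := mul_nonneg (Real.log_nonneg hr) hp
  have hzr : z ≤ p * (r - 1) := by
    rw [mul_comm p]; exact mul_le_mul_of_nonneg_right (Real.log_le_sub_one_of_pos hr0) hp
  -- `exp z - 1 ≤ z * exp z` is `1 - z ≤ exp (-z)` multiplied by `exp z`
  have hexp : Real.exp z - 1 ≤ z * Real.exp z := by
    have h := Real.add_one_le_exp (-z)
    have h' := mul_le_mul_of_nonneg_right h (Real.exp_pos z).le
    rw [← Real.exp_add, neg_add_cancel, Real.exp_zero] at h'
    linarith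
  exact hexp.trans (mul_le_mul_of_nonneg_right hzr (Real.exp_pos z).le)

lemma rpow_neg_sub_div_rpow_neg_add_sub_one_le {t R p : ℝ} (hR : 0 < R) (ht : 2 * R ≤ t)
    (hp : 0 ≤ p) : (t - R) ^ (-p) / (t + R) ^ (-p) - 1 ≤ 4 * p * 3 ^ p * R / t := by
  have htR : 0 < t - R := by linarith
  have ht0 : 0 < t := by linarith
  rw [Real.rpow_neg htR.le, Real.rpow_neg (by linarith), inv_div_inv,
    ← Real.div_rpow (by linarith) htR.le]
  set r := (t + R) / (t - R)
  have hr1 : 1 ≤ r := (one_le_div htR).2 (by linarith)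
  have hr3 : r ≤ 3 := (div_le_iff₀ htR).2 (by linarith)
  have hr : r - 1 ≤ 4 * R / t := by
    rw [div_sub_one htR.ne', div_le_div_iff₀ htR ht0]
    nlinarith
  calc r ^ p - 1 ≤ p * (r - 1) * r ^ p := Real.rpow_sub_one_le_mul_rpow hr1 hp
    _ ≤ p * (4 * R / t) * 3 ^ p := by gcongr
    _ = 4 * p * 3 ^ p * R / t := by ring

theorem stmt11_general (N : ℕ) (s R₀ : ℝ) (hs0 : 0 < s)
    (hR₀ : 0 < R₀) :
    ∃ C > 0, ∀ Ω : Set (EuclideanSpace ℝ (Fin N)), IsOpen Ω → Ω.Nonempty →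
      Ω ⊆ ball (0 : EuclideanSpace ℝ (Fin N)) R₀ →
      ∀ u : EuclideanSpace ℝ (Fin N) → ℝ, IntegrableOn u Ω volume →
        (∀ y, 0 ≤ u y) →
        (∀ x ∈ Ωᶜ, u x =
          (∫ y in Ω, u y * ‖x - y‖ ^ (-((N : ℝ) + 2 * s))) /
            ∫ y in Ω, ‖x - y‖ ^ (-((N : ℝ) + 2 * s))) →
        ∀ x ∈ Ωᶜ, 2 * R₀ ≤ ‖x‖ →
          |u x - (volume Ω).toReal⁻¹ * ∫ y in Ω, u y| ≤
            (C / ‖x‖) * ((volume Ω).toReal⁻¹ * ∫ y in Ω, u y) := by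
  have hp : 0 ≤ (N : ℝ) + 2 * s := by positivity
  refine ⟨4 * ((N : ℝ) + 2 * s) * 3 ^ ((N : ℝ) + 2 * s) * R₀, by positivity, ?_⟩
  intro Ω hΩ hΩne hΩR u hu hu0 hext x hx hxR
  have hΩfin : volume Ω ≠ ⊤ := ((measure_mono hΩR).trans_lt measure_ball_lt_top).ne
  have hkΩ : ∀ y ∈ Ω, ‖x - y‖ ^ (-((N : ℝ) + 2 * s)) ∈
      Icc ((‖x‖ + R₀) ^ (-((N : ℝ) + 2 * s))) ((‖x‖ - R₀) ^ (-((N : ℝ) + 2 * s))) :=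
    fun y hy => rpow_neg_norm_sub_mem_Icc hp (by simpa using hΩR hy) (by linarith)
  have hA : 0 ≤ (volume Ω).toReal⁻¹ * ∫ y in Ω, u y :=
    mul_nonneg (by positivity) (integral_nonneg hu0)
  rw [hext x hx]
  calc _ ≤ _ := abs_setIntegral_mul_div_sub_average_le hΩ.measurableSet hΩfin
        (hΩ.measure_pos volume hΩne).ne' hu (fun y _ => hu0 y)
        (by fun_prop : Measurable fun y => ‖x - y‖ ^ (-((N : ℝ) + 2 * s))).aestronglyMeasurable
        (Real.rpow_pos_of_pos (by linarith) _) hkΩ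
    _ ≤ _ := by
        gcongr
        exact rpow_neg_sub_div_rpow_neg_add_sub_one_le hR₀ hxR hp

theorem stmt11 (N : ℕ) (hN : 0 < N) (s R₀ : ℝ) (hs0 : 0 < s) (hs1 : s < 1)
    (hR₀ : 0 < R₀) :
    ∃ C > 0, ∀ Ω : Set (EuclideanSpace ℝ (Fin N)), IsOpen Ω → Ω.Nonempty →
      Ω ⊆ ball (0 : EuclideanSpace ℝ (Fin N)) R₀ →
      ∀ u : EuclideanSpace ℝ (Fin N) → ℝ, IntegrableOn u Ω volume →
        (∀ y, 0 ≤ u y) →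
        (∀ x ∈ Ωᶜ, u x =
          (∫ y in Ω, u y * ‖x - y‖ ^ (-((N : ℝ) + 2 * s))) /
            ∫ y in Ω, ‖x - y‖ ^ (-((N : ℝ) + 2 * s))) →
        ∀ x ∈ Ωᶜ, 2 * R₀ ≤ ‖x‖ →
          |u x - (volume Ω).toReal⁻¹ * ∫ y in Ω, u y| ≤
            (C / ‖x‖) * ((volume Ω).toReal⁻¹ * ∫ y in Ω, u y) :=
  stmt11_general N s R₀ hs0 hR₀
end
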